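/- Let a, b > 0 and let k : ℝ → (0,1) solve k' = k(1−k)((1−a/b)k + a/b). Then k'(x)/k(x) → a/b as x → −∞ and k'(x)/(1 − k(x)) → 1 as x → +∞. -/

import Mathlib

/-!
Since `k' = F(k) > 0` for the cubic `F(y) = y (1 - y) ((1 - c) y + c)` with `c = a / b ≥ 0`,
`k` is monotone and bounded, hence has limits at `±∞`. A convergent function whose derivative
converges must have derivative tending to `0` (mean value theorem on `[x, x + 1]`), so both
limits are zeros of `F` in `[0, 1]`, which forces `k → 0` at `-∞` and `k → 1` at `+∞`. Then
`k'/k = (1 - k)((1 - c) k + c) → c` and `k'/(1 - k) = k ((1 - c) k + c) → 1`.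
-/

open Filter Topology Set

theorem eq_zero_of_hasDerivAt_of_tendsto_atTop {f f' : ℝ → ℝ} {L m : ℝ}
    (hf : ∀ x, HasDerivAt f (f' x) x) (hfL : Tendsto f atTop (𝓝 L))
    (hf'm : Tendsto f' atTop (𝓝 m)) : m = 0 := by
  choose ξ hξ hf'ξ using fun x : ℝ =>
    exists_hasDerivAt_eq_slope f f' (lt_add_one x)
      (fun y _ => (hf y).continuousAt.continuousWithinAt) (fun y _ => hf y)
  have hξ_top : Tendsto ξ atTop atTop := tendsto_atTop_mono (fun x => (hξ x).1.le) tendsto_id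
  have hslope : Tendsto (fun x => (f (x + 1) - f x) / (x + 1 - x)) atTop (𝓝 ((L - L) / 1)) := by
    simp only [add_sub_cancel_left]
    exact ((hfL.comp (tendsto_atTop_add_const_right _ 1 tendsto_id)).sub hfL).div_const 1
  rw [sub_self, zero_div] at hslope
  exact tendsto_nhds_unique ((hf'm.comp hξ_top).congr hf'ξ) hslope

theorem eq_zero_of_hasDerivAt_of_tendsto_atBot {f f' : ℝ → ℝ} {L m : ℝ}
    (hf : ∀ x, HasDerivAt f (f' x) x) (hfL : Tendsto f atBot (𝓝 L))
    (hf'm : Tendsto f' atBot (𝓝 m)) : m = 0 := by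
  have hneg : ∀ x, HasDerivAt (fun y => f (-y)) (f' (-x) * -1) x :=
    fun x => (hf (-x)).comp x (hasDerivAt_neg x)
  have := eq_zero_of_hasDerivAt_of_tendsto_atTop hneg (hfL.comp tendsto_neg_atTop_atBot)
    ((hf'm.comp tendsto_neg_atTop_atBot).mul_const (-1))
  simpa using this

def cubicField (c y : ℝ) : ℝ := y * (1 - y) * ((1 - c) * y + c)

theorem continuous_cubicField (c : ℝ) : Continuous (cubicField c) := by
  unfold cubicField; fun_prop

theorem cubicField_pos {c y : ℝ} (hc : 0 ≤ c) (hy : y ∈ Ioo 0 1) : 0 < cubicField c y := by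
  obtain ⟨hy0, hy1⟩ := hy
  have hlin : 0 < (1 - c) * y + c := by nlinarith
  have hy1' : 0 < 1 - y := sub_pos.2 hy1
  unfold cubicField
  positivity

section Solution

variable {c : ℝ} {k : ℝ → ℝ} (hc : 0 ≤ c) (hk : ∀ x, k x ∈ Ioo 0 1)
  (hode : ∀ x, HasDerivAt k (cubicField c (k x)) x)
include hc hk hode

theorem tendsto_atTop_one_of_hasDerivAt_cubicField : Tendsto k atTop (𝓝 1) := by
  have hmono : Monotone k :=
    monotone_of_hasDerivAt_nonneg hode fun x => (cubicField_pos hc (hk x)).le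
  have hbdd : BddAbove (range k) := ⟨1, by rintro _ ⟨x, rfl⟩; exact (hk x).2.le⟩
  set L := ⨆ x, k x
  have hkL : Tendsto k atTop (𝓝 L) := tendsto_atTop_ciSup hmono hbdd
  have hzero : cubicField c L = 0 := eq_zero_of_hasDerivAt_of_tendsto_atTop hode hkL
    (((continuous_cubicField c).tendsto L).comp hkL)
  have hL0 : 0 < L := (hk 0).1.trans_le (le_ciSup hbdd 0)
  have hL1 : L ≤ 1 := ciSup_le fun x => (hk x).2.le
  have hfactor : 0 < L * ((1 - c) * L + c) := mul_pos hL0 (by nlinarith)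
  have hL : 1 - L = 0 := by
    have : (1 - L) * (L * ((1 - c) * L + c)) = 0 := by rw [← hzero]; unfold cubicField; ring
    simpa [hfactor.ne'] using this
  rwa [← sub_eq_zero.1 hL] at hkL

theorem tendsto_atBot_zero_of_hasDerivAt_cubicField : Tendsto k atBot (𝓝 0) := by
  have hmono : Monotone k :=
    monotone_of_hasDerivAt_nonneg hode fun x => (cubicField_pos hc (hk x)).le
  have hbdd : BddBelow (range k) := ⟨0, by rintro _ ⟨x, rfl⟩; exact (hk x).1.le⟩
  set l := ⨅ x, k x
  have hkl : Tendsto k atBot (𝓝 l) := tendsto_atBot_ciInf hmono hbdd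
  have hzero : cubicField c l = 0 := eq_zero_of_hasDerivAt_of_tendsto_atBot hode hkl
    (((continuous_cubicField c).tendsto l).comp hkl)
  have hl0 : 0 ≤ l := le_ciInf fun x => (hk x).1.le
  have hl1 : l < 1 := (ciInf_le hbdd 0).trans_lt (hk 0).2
  have hl : l = 0 := by
    unfold cubicField at hzero
    rcases mul_eq_zero.1 hzero with h | h
    · rcases mul_eq_zero.1 h with h | h
      · exact h
      · linarith
    · nlinarith
  rwa [hl] at hkl

end Solution

theorem stmt_6 (a b : ℝ) (ha : 0 < a) (hb : 0 < b) (k : ℝ → ℝ)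
    (hk : ∀ x, k x ∈ Set.Ioo (0:ℝ) 1)
    (hode : ∀ x, HasDerivAt k (k x * (1 - k x) * ((1 - a / b) * k x + a / b)) x) :
    Tendsto (fun x => deriv k x / k x) atBot (nhds (a / b)) ∧
      Tendsto (fun x => deriv k x / (1 - k x)) atTop (nhds 1) := by
  set c := a / b
  have hc : 0 ≤ c := div_nonneg ha.le hb.le
  have hode' : ∀ x, HasDerivAt k (cubicField c (k x)) x := hode
  have hderiv (x : ℝ) : deriv k x = cubicField c (k x) := (hode' x).deriv
  constructor
  · have hlim : Tendsto (fun y => (1 - y) * ((1 - c) * y + c)) (𝓝 0) (𝓝 c) := by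
      convert (by fun_prop : Continuous fun y : ℝ => (1 - y) * ((1 - c) * y + c)).tendsto 0
        using 2; ring
    refine (hlim.comp (tendsto_atBot_zero_of_hasDerivAt_cubicField hc hk hode')).congr fun x => ?_
    rw [hderiv, cubicField, Function.comp_apply, mul_assoc, mul_div_cancel_left₀ _ (hk x).1.ne']
  · have hlim : Tendsto (fun y => y * ((1 - c) * y + c)) (𝓝 1) (𝓝 1) := by
      convert (by fun_prop : Continuous fun y : ℝ => y * ((1 - c) * y + c)).tendsto 1
        using 2; ring
    refine (hlim.comp (tendsto_atTop_one_of_hasDerivAt_cubicField hc hk hode')).congr fun x => ?_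
    rw [hderiv, cubicField, Function.comp_apply, mul_right_comm,
      mul_div_cancel_right₀ _ (sub_pos.2 (hk x).2).ne']
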